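/- Let F, G be probability measures on ℝ^k absolutely continuous with respect to Lebesgue measure λ, where F has compact support Θ_F of positive finite Lebesgue measure. Suppose the densities f and g both take values in [0, 1/2]. Then |H(F) − H(G)| ≤ δ·log(λ(Θ_F)/δ) + |∫_{Θ_F^c} g·log g dλ|, where δ := ∫_{Θ_F} |f − g| dλ (when δ > 0; if δ = 0 the first term is 0). -/

import Mathlib

/-!
Pointwise, `|x log x - y log y| ≤ -|x - y| log |x - y|` for `x, y ∈ [0, 1/2]`: one direction is
subadditivity of `-t log t`, the other the tangent line of `t log t`. Integrating over `Θ_F`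
and applying Jensen's inequality to the concave function `-t log t` with respect to normalised
Lebesgue measure on `Θ_F` bounds the `Θ_F`-part of the entropy difference by
`δ log (λ(Θ_F) / δ)`. Off `Θ_F` the density `f` vanishes, leaving only the `g`-term.
-/

open MeasureTheory Real

namespace Real

lemma mul_log_le_mul_log_of_le {x z : ℝ} (hx : 0 ≤ x) (hxz : x ≤ z) :
    x * log x ≤ x * log z := by
  rcases hx.eq_or_lt with rfl | hx
  · simp
  · exact mul_le_mul_of_nonneg_left (log_le_log hx hxz) hx.le

lemma negMulLog_add_le {x y : ℝ} (hx : 0 ≤ x) (hy : 0 ≤ y) :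
    negMulLog (x + y) ≤ negMulLog x + negMulLog y := by
  have hx' := mul_log_le_mul_log_of_le hx (le_add_of_nonneg_right hy)
  have hy' := mul_log_le_mul_log_of_le hy (le_add_of_nonneg_left hx)
  simp only [negMulLog_eq_neg]
  linarith [add_mul x y (log (x + y))]

/-- The tangent line of the convex function `t log t` at `z` lies below its graph. -/
lemma mul_log_sub_mul_log_le {x z : ℝ} (hx : 0 ≤ x) (hxz : x ≤ z) :
    z * log z - x * log x ≤ (z - x) * (log z + 1) := by
  rcases hx.eq_or_lt with rfl | hx
  · simp only [zero_mul, sub_zero]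
    nlinarith
  have hz : 0 < z := hx.trans_le hxz
  have hlog : log (z / x) ≤ z / x - 1 := log_le_sub_one_of_pos (div_pos hz hx)
  rw [log_div hz.ne' hx.ne'] at hlog
  have : x * (log z - log x) ≤ z - x := by
    calc x * (log z - log x) ≤ x * (z / x - 1) := mul_le_mul_of_nonneg_left hlog hx.le
      _ = z - x := by field_simp
  nlinarith

lemma negMulLog_sub_negMulLog_le {x z : ℝ} (hx : 0 ≤ x) (hxz : x ≤ z) (hz : z ≤ 1 / 2) :
    negMulLog x - negMulLog z ≤ negMulLog (z - x) := by
  have htangent := mul_log_sub_mul_log_le hx hxz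
  simp only [negMulLog_eq_neg]
  rcases (sub_nonneg.mpr hxz).eq_or_lt with hd | hd
  · rw [← hd] at htangent ⊢
    simpa using htangent
  -- `z (z - x) ≤ 1/4 < exp (-1)`, i.e. `log z + log (z - x) + 1 ≤ 0`
  have hhalf : log (1 / 2) = -log 2 := by rw [one_div, log_inv]
  have hlogz : log z ≤ log (1 / 2) := log_le_log (hd.trans_le (by linarith)) hz
  have hlogd : log (z - x) ≤ log (1 / 2) := log_le_log hd (by linarith)
  have hlog2 : (0.6931471803 : ℝ) < log 2 := log_two_gt_d9
  nlinarith

lemma abs_negMulLog_sub_negMulLog_le {x y : ℝ} (hx0 : 0 ≤ x) (hy0 : 0 ≤ y)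
    (hx : x ≤ 1 / 2) (hy : y ≤ 1 / 2) :
    |negMulLog x - negMulLog y| ≤ negMulLog |x - y| := by
  wlog hxy : x ≤ y generalizing x y
  · rw [abs_sub_comm, abs_sub_comm x]
    exact this hy0 hx0 hy hx (le_of_not_ge hxy)
  rw [abs_of_nonpos (sub_nonpos.mpr hxy), neg_sub, abs_le]
  constructor
  · have := negMulLog_add_le hx0 (sub_nonneg.mpr hxy)
    rw [add_sub_cancel] at this
    linarith
  · exact negMulLog_sub_negMulLog_le hx0 hxy hy

end Real

section Integral

variable {α : Type*} [MeasurableSpace α] {μ : Measure α} {s : Set α}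

lemma integrableOn_negMulLog_of_le_one {u : α → ℝ} (hs : μ s ≠ ⊤) (hu : Measurable u)
    (hu0 : ∀ x, 0 ≤ u x) (hu1 : ∀ x, u x ≤ 1) :
    IntegrableOn (fun x ↦ negMulLog (u x)) s μ := by
  refine Measure.integrableOn_of_bounded (M := 1) hs
    (continuous_negMulLog.measurable.comp hu).aestronglyMeasurable (.of_forall fun x ↦ ?_)
  rw [Real.norm_eq_abs, abs_of_nonneg (negMulLog_nonneg (hu0 x) (hu1 x))]
  linarith [negMulLog_le_one_sub_self (hu0 x), hu0 x]

lemma abs_setIntegral_mul_log_sub_le {f g : α → ℝ} (hs : MeasurableSet s)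
    (hf0 : ∀ x ∈ s, 0 ≤ f x) (hg0 : ∀ x ∈ s, 0 ≤ g x)
    (hf : ∀ x ∈ s, f x ≤ 1 / 2) (hg : ∀ x ∈ s, g x ≤ 1 / 2)
    (hfi : IntegrableOn (fun x ↦ f x * log (f x)) s μ)
    (hgi : IntegrableOn (fun x ↦ g x * log (g x)) s μ)
    (hi : IntegrableOn (fun x ↦ negMulLog |f x - g x|) s μ) :
    |∫ x in s, f x * log (f x) ∂μ - ∫ x in s, g x * log (g x) ∂μ| ≤
      ∫ x in s, negMulLog |f x - g x| ∂μ := by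
  rw [← integral_sub hfi hgi]
  refine (abs_integral_le_integral_abs).trans (setIntegral_mono_on (hfi.sub hgi).abs hi hs ?_)
  intro x hx
  have := abs_negMulLog_sub_negMulLog_le (hf0 x hx) (hg0 x hx) (hf x hx) (hg x hx)
  rwa [negMulLog, negMulLog, neg_mul, neg_mul, neg_sub_neg, abs_sub_comm] at this

/-- Jensen's inequality for the concave function `negMulLog` on the normalised restriction of `μ`
to `s`. -/
lemma setIntegral_negMulLog_le {u : α → ℝ} (h0 : μ s ≠ 0) (hs : μ s ≠ ⊤)
    (hu : ∀ᵐ x ∂μ.restrict s, 0 ≤ u x) (hui : IntegrableOn u s μ)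
    (hi : IntegrableOn (fun x ↦ negMulLog (u x)) s μ) :
    ∫ x in s, negMulLog (u x) ∂μ ≤ (∫ x in s, u x ∂μ) * log (μ.real s / ∫ x in s, u x ∂μ) := by
  have hjensen := concaveOn_negMulLog.le_map_set_average continuous_negMulLog.continuousOn
    isClosed_Ici h0 hs hu hui hi
  rw [setAverage_eq, setAverage_eq, smul_eq_mul, smul_eq_mul] at hjensen
  have hL : 0 < μ.real s := ENNReal.toReal_pos h0 hs
  set L := μ.real s
  set δ := ∫ x in s, u x ∂μ
  calc ∫ x in s, negMulLog (u x) ∂μ = L * (L⁻¹ * ∫ x in s, negMulLog (u x) ∂μ) := by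
        field_simp
    _ ≤ L * negMulLog (L⁻¹ * δ) := mul_le_mul_of_nonneg_left hjensen hL.le
    _ = δ * log (L / δ) := by
        rw [negMulLog, ← inv_div, log_inv]
        field_simp

end Integral

theorem entropy_diff_bound_general (k : ℕ)
    (f g : (Fin k → ℝ) → ℝ) (hf : Measurable f) (hg : Measurable g)
    (hf0 : ∀ θ, 0 ≤ f θ) (hg0 : ∀ θ, 0 ≤ g θ)
    (ΘF : Set (Fin k → ℝ)) (hΘFm : MeasurableSet ΘF)
    (hΘFpos : 0 < volume ΘF) (hΘFfin : volume ΘF < ⊤)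
    (hsupp : ∀ θ, θ ∉ ΘF → f θ = 0)
    (hfle : ∀ θ, f θ ≤ 1/2) (hgle : ∀ θ, g θ ≤ 1/2)
    (hfint : Integrable (fun θ => f θ * Real.log (f θ)))
    (hgint : Integrable (fun θ => g θ * Real.log (g θ)))
    (δ : ℝ) (hδ : δ = ∫ θ in ΘF, |f θ - g θ|) :
    |(-∫ θ, f θ * Real.log (f θ)) - (-∫ θ, g θ * Real.log (g θ))| ≤
      δ * Real.log ((volume ΘF).toReal / δ) +
        |∫ θ in ΘFᶜ, g θ * Real.log (g θ)| := by
  have hdiff_le : ∀ θ, |f θ - g θ| ≤ 1 := fun θ ↦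
    (abs_sub_le_of_nonneg_of_le (hf0 θ) (hfle θ) (hg0 θ) (hgle θ)).trans (by norm_num)
  have hdiff_meas : Measurable fun θ ↦ |f θ - g θ| := (hf.sub hg).abs
  have hdiff_int : IntegrableOn (fun θ ↦ |f θ - g θ|) ΘF :=
    Measure.integrableOn_of_bounded hΘFfin.ne hdiff_meas.aestronglyMeasurable
      (.of_forall fun θ ↦ by simpa using hdiff_le θ)
  have hent_int : IntegrableOn (fun θ ↦ negMulLog |f θ - g θ|) ΘF :=
    integrableOn_negMulLog_of_le_one hΘFfin.ne hdiff_meas (fun θ ↦ abs_nonneg _) hdiff_le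
  have hf_off : ∫ θ in ΘFᶜ, f θ * log (f θ) = 0 :=
    setIntegral_eq_zero_of_forall_eq_zero fun θ hθ ↦ by simp [hsupp θ hθ]
  have hon := abs_setIntegral_mul_log_sub_le hΘFm (fun θ _ ↦ hf0 θ) (fun θ _ ↦ hg0 θ)
    (fun θ _ ↦ hfle θ) (fun θ _ ↦ hgle θ) hfint.integrableOn hgint.integrableOn hent_int
  have hjensen := setIntegral_negMulLog_le hΘFpos.ne' hΘFfin.ne
    (.of_forall fun θ ↦ abs_nonneg _) hdiff_int hent_int
  rw [← hδ, measureReal_def] at hjensen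
  rw [← integral_add_compl hΘFm hfint, ← integral_add_compl hΘFm hgint, hf_off]
  calc _ = |((∫ θ in ΘF, f θ * log (f θ)) - ∫ θ in ΘF, g θ * log (g θ))
          - ∫ θ in ΘFᶜ, g θ * log (g θ)| := by rw [add_zero, ← abs_neg]; ring_nf
    _ ≤ _ := (abs_sub _ _).trans (add_le_add (hon.trans hjensen) le_rfl)

/-- Bound on the difference of differential entropies in terms of the `L¹` distance
of the densities on the (compact) support of `F` and a residual term. -/
theorem entropy_diff_bound (k : ℕ)
    (F G : Measure (Fin k → ℝ)) [IsProbabilityMeasure F] [IsProbabilityMeasure G]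
    (f g : (Fin k → ℝ) → ℝ) (hf : Measurable f) (hg : Measurable g)
    (hf0 : ∀ θ, 0 ≤ f θ) (hg0 : ∀ θ, 0 ≤ g θ)
    (hF : F = volume.withDensity (fun θ => ENNReal.ofReal (f θ)))
    (hG : G = volume.withDensity (fun θ => ENNReal.ofReal (g θ)))
    (ΘF : Set (Fin k → ℝ)) (hΘF : IsCompact ΘF) (hΘFm : MeasurableSet ΘF)
    (hΘFpos : 0 < volume ΘF) (hΘFfin : volume ΘF < ⊤)
    (hsupp : ∀ θ, θ ∉ ΘF → f θ = 0)
    (hfle : ∀ θ, f θ ≤ 1/2) (hgle : ∀ θ, g θ ≤ 1/2)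
    (hfint : Integrable (fun θ => f θ * Real.log (f θ)))
    (hgint : Integrable (fun θ => g θ * Real.log (g θ)))
    (δ : ℝ) (hδ : δ = ∫ θ in ΘF, |f θ - g θ|) :
    |(-∫ θ, f θ * Real.log (f θ)) - (-∫ θ, g θ * Real.log (g θ))| ≤
      δ * Real.log ((volume ΘF).toReal / δ) +
        |∫ θ in ΘFᶜ, g θ * Real.log (g θ)| :=
  entropy_diff_bound_general k f g hf hg hf0 hg0 ΘF hΘFm hΘFpos hΘFfin hsupp hfle hgle hfint hgint δ
    hδ
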